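/- Let G = (L ⊔ R, E) be an (r, Δ, c)-boundary expander and J ⊆ R with |Ext_G(J)| ≤ cr/4. Then the graph G' := G \ Ext_G(J), obtained by deleting the vertices Ext_G(J) from R together with all vertices of L all of whose neighbours lie in Ext_G(J), is an (r, Δ, c/2)-weak expander. -/

import Mathlib

/-!
Deleting `E = Ext_G(J)` from `R` removes exactly `E` from every boundary, and no surviving left
vertex lies in the closure `Icl` (all its neighbours are in `E`). Since `∂(Icl) ⊆ J ⊆ E`,
expansion gives `c|Icl| ≤ |E| ≤ cr/4`, i.e. `|Icl| ≤ r/4`. A nonempty surviving `I` with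
`|I| ≤ r/2` and `∂(I) ⊆ E` could be added to `Icl`, contradicting maximality of the closure.
A surviving `I` with `|I| > r/2` loses at most `|E| ≤ cr/4 < c|I|/2` boundary vertices.
-/

open Finset

variable {L R : Type*} [Fintype L] [Fintype R] [DecidableEq L] [DecidableEq R]

/-- The set of neighbours of `I ⊆ L` in the bipartite graph with adjacency `A`. -/
def nbhd (A : L → R → Prop) [∀ a b, Decidable (A a b)] (I : Finset L) : Finset R :=
  Finset.univ.filter (fun b => ∃ a ∈ I, A a b)

/-- The boundary of `I ⊆ L`: vertices of `R` adjacent to exactly one vertex of `I`. -/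
def bdry (A : L → R → Prop) [∀ a b, Decidable (A a b)] (I : Finset L) : Finset R :=
  Finset.univ.filter (fun b => (I.filter (fun a => A a b)).card = 1)

/-- Degree of a left vertex. -/
def ldeg (A : L → R → Prop) [∀ a b, Decidable (A a b)] (a : L) : ℕ :=
  (Finset.univ.filter (fun b => A a b)).card

/-- `(r, Δ, c)`-boundary expander. -/
def IsBoundaryExpander (A : L → R → Prop) [∀ a b, Decidable (A a b)] (r Δ : ℕ) (c : ℝ) : Prop :=
  (∀ a : L, ldeg A a ≤ Δ) ∧
  ∀ I : Finset L, I.card ≤ r → c * I.card ≤ ((bdry A I).card : ℝ)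

/-- `I` is `(r, J)`-contained: `|I| ≤ r` and `∂(I) ⊆ J`. -/
def IsContained (A : L → R → Prop) [∀ a b, Decidable (A a b)] (r : ℕ) (J : Finset R) (I : Finset L) : Prop :=
  I.card ≤ r ∧ bdry A I ⊆ J

/-- `I` is a closure of `J`: an `(r, J)`-contained set of maximal size. -/
def IsClosure (A : L → R → Prop) [∀ a b, Decidable (A a b)] (r : ℕ) (J : Finset R) (I : Finset L) : Prop :=
  IsContained A r J I ∧ ∀ I' : Finset L, IsContained A r J I' → I'.card ≤ I.card

/-- `(r, Δ, c)`-weak (boundary) expander. -/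
def IsWeakExpander (A : L → R → Prop) [∀ a b, Decidable (A a b)] (r Δ : ℕ) (c : ℝ) : Prop :=
  (∀ a : L, ldeg A a ≤ Δ) ∧
  (∀ I : Finset L, I.Nonempty → (I.card : ℝ) ≤ r / 2 → (bdry A I).Nonempty) ∧
  (∀ I : Finset L, (r : ℝ) / 2 < I.card → I.card ≤ r → c * I.card ≤ ((bdry A I).card : ℝ))

section Deletion

variable {L R : Type*} [Fintype R] {A A' : L → R → Prop} [∀ a b, Decidable (A a b)]
  [∀ a b, Decidable (A' a b)]

lemma mem_nbhd {I : Finset L} {b : R} : b ∈ nbhd A I ↔ ∃ a ∈ I, A a b := by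
  simp [nbhd]

lemma mem_bdry {I : Finset L} {b : R} : b ∈ bdry A I ↔ (I.filter (A · b)).card = 1 := by
  simp [bdry]

lemma ldeg_mono (h : ∀ a b, A' a b → A a b) (a : L) : ldeg A' a ≤ ldeg A a :=
  card_le_card fun b hb => by
    simp only [mem_filter, mem_univ, true_and] at hb ⊢
    exact h a b hb

lemma bdry_eq_sdiff_of_iff [DecidableEq R] {S : Finset R} (h : ∀ a b, A' a b ↔ A a b ∧ b ∉ S)
    (I : Finset L) : bdry A' I = bdry A I \ S := by
  ext b
  by_cases hb : b ∈ S
  · have : I.filter (A' · b) = ∅ := filter_eq_empty_iff.mpr fun a _ => by simp [h, hb]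
    simp [mem_bdry, this, hb]
  · have : I.filter (A' · b) = I.filter (A · b) := filter_congr fun a _ => by simp [h, hb]
    simp [mem_bdry, this, hb]

lemma bdry_union_subset [DecidableEq L] [DecidableEq R] {I K : Finset L} (hIK : Disjoint I K) :
    bdry A (I ∪ K) ⊆ bdry A I ∪ (bdry A K \ nbhd A I) := by
  intro b hb
  rw [mem_bdry, filter_union, card_union_of_disjoint (disjoint_filter_filter hIK)] at hb
  rcases Nat.add_eq_one_iff.mp hb with ⟨hI, hK⟩ | ⟨hI, -⟩
  · refine mem_union_right _ (mem_sdiff.mpr ⟨mem_bdry.mpr hK, fun hN => ?_⟩)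
    obtain ⟨a, ha, hab⟩ := mem_nbhd.mp hN
    have : a ∈ I.filter (A · b) := mem_filter.mpr ⟨ha, hab⟩
    simp [card_eq_zero.mp hI] at this
  · exact mem_union_left _ (mem_bdry.mpr hI)

lemma IsContained.mul_card_le {r : ℕ} {c : ℝ} {J : Finset R} {I : Finset L}
    (hbd : ∀ I : Finset L, I.card ≤ r → c * I.card ≤ (bdry A I).card)
    (hI : IsContained A r J I) : c * I.card ≤ J.card :=
  (hbd I hI.1).trans (by exact_mod_cast card_le_card hI.2)

/-- Otherwise `Icl ∪ I` would be a larger `(r, J)`-contained set. -/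
lemma IsClosure.eq_empty_of_bdry_subset [DecidableEq L] [DecidableEq R] {r : ℕ} {J : Finset R}
    {Icl I : Finset L}
    (hIcl : IsClosure A r J Icl) (hdisj : Disjoint Icl I) (hcard : Icl.card + I.card ≤ r)
    (hI : bdry A I ⊆ J ∪ nbhd A Icl) : I = ∅ := by
  have hunion : IsContained A r J (Icl ∪ I) := by
    refine ⟨(card_union_le _ _).trans hcard, (bdry_union_subset hdisj).trans ?_⟩
    refine union_subset hIcl.1.2 fun b hb => ?_
    obtain ⟨hbI, hbN⟩ := mem_sdiff.mp hb
    exact (mem_union.mp (hI hbI)).resolve_right hbN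
  have := hIcl.2 _ hunion
  rw [card_union_of_disjoint hdisj] at this
  exact card_eq_zero.mp (by omega)

lemma half_mul_card_le_card_bdry_sdiff [DecidableEq R] {c : ℝ} {S : Finset R} {I : Finset L}
    (hI : c * I.card ≤ (bdry A I).card) (hS : (S.card : ℝ) ≤ c * I.card / 2) :
    c / 2 * I.card ≤ (bdry A I \ S).card := by
  have : ((bdry A I).card : ℝ) ≤ (bdry A I \ S).card + S.card := by
    exact_mod_cast card_le_card_sdiff_add_card
  linarith

end Deletion

/-- If `G` is an `(r, Δ, c)`-boundary expander, `J ⊆ R` and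
`|Ext_G(J)| ≤ cr/4`, then `G' = G \ Ext_G(J)` (with adjacency `A'` avoiding `Ext_G(J)`,
and surviving left vertices those with a neighbour outside `Ext_G(J)`) is an
`(r, Δ, c/2)`-weak expander. -/
theorem deletion_is_weak_expander (A : L → R → Prop) [∀ a b, Decidable (A a b)]
    (r Δ : ℕ) (c : ℝ) (hc : 0 < c)
    (hexp : IsBoundaryExpander A r Δ c)
    (J : Finset R) (Icl : Finset L) (hIcl : IsClosure A r J Icl)
    (hext : (((J ∪ nbhd A Icl)).card : ℝ) ≤ c * r / 4) :
    -- `A'` is the adjacency of `G' = G \ Ext_G(J)`, `Lset` its surviving left part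
    ∀ (A' : L → R → Prop) (_ : ∀ a b, A' a b ↔ A a b ∧ b ∉ J ∪ nbhd A Icl)
      (_ : ∀ a b, Decidable (A' a b))
      (Lset : Finset L) (_ : ∀ a, a ∈ Lset ↔ ∃ b, A a b ∧ b ∉ J ∪ nbhd A Icl),
      (∀ a ∈ Lset, ldeg A' a ≤ Δ) ∧
      (∀ I : Finset L, I ⊆ Lset → I.Nonempty → (I.card : ℝ) ≤ r / 2 →
        (bdry A' I).Nonempty) ∧
      (∀ I : Finset L, I ⊆ Lset → (r : ℝ) / 2 < I.card → I.card ≤ r →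
        c / 2 * I.card ≤ ((bdry A' I).card : ℝ)) := by
  obtain ⟨hdeg, hbd⟩ := hexp
  intro A' hA' _ Lset hLset
  have hbdry' := bdry_eq_sdiff_of_iff hA'
  have hIcl_card : (Icl.card : ℝ) ≤ r / 4 := by
    have hJ : (J.card : ℝ) ≤ (J ∪ nbhd A Icl).card := by
      exact_mod_cast card_le_card subset_union_left
    have := (hIcl.1.mul_card_le hbd).trans (hJ.trans hext)
    rw [mul_div_assoc] at this
    exact le_of_mul_le_mul_left this hc
  have hdisj : Disjoint Icl Lset := disjoint_left.mpr fun a ha hL => by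
    obtain ⟨b, hab, hb⟩ := (hLset a).mp hL
    exact hb (mem_union_right _ (mem_nbhd.mpr ⟨a, ha, hab⟩))
  refine ⟨fun a _ => (ldeg_mono (fun a b h => ((hA' a b).mp h).1) a).trans (hdeg a), ?_, ?_⟩
  · intro I hIL hIne hIr
    rw [nonempty_iff_ne_empty, hbdry', Ne, sdiff_eq_empty_iff_subset]
    intro hsub
    have hcard : ((Icl.card + I.card : ℕ) : ℝ) ≤ r := by push_cast; linarith
    exact hIne.ne_empty
      (hIcl.eq_empty_of_bdry_subset (hdisj.mono_right hIL) (by exact_mod_cast hcard) hsub)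
  · intro I _ hIr hIr'
    rw [hbdry']
    refine half_mul_card_le_card_bdry_sdiff (hbd I hIr') (hext.trans ?_)
    nlinarith
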